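/- Let f : ℝ → ℝ be twice continuously differentiable, fix an interval [a₀, b₀] with a₀ < b₀, and let c₀ ∈ (a₀, b₀) be a mean value abscissa for f on [a₀, b₀]. Suppose f'(b₀) ≠ f'(c₀). Then there exist δ > 0, ε > 0, and a continuously differentiable function B : (c₀ - ε, c₀ + ε) → ℝ with B(c₀) = b₀ such that (f(B(c)) - f(a₀))/(B(c) - a₀) = f'(c) for all c with |c - c₀| < ε; moreover, if |b - b₀| < δ, |c - c₀| < ε, and (f(b) - f(a₀))/(b - a₀) = f'(c), then b = B(c). -/

import Mathlib

/-!
The slope `g b = (f b - f a₀) / (b - a₀)` has derivative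
`(f'(b₀) - g(b₀)) / (b₀ - a₀) = (f'(b₀) - f'(c₀)) / (b₀ - a₀) ≠ 0` at `b₀`, so by the inverse
function theorem it has a `C¹` local inverse `G` near `g(b₀) = f'(c₀)`, which also undoes `g` on a
neighbourhood of `b₀` (this gives uniqueness). As `f'` is `C¹`, `B := G ∘ f'` is the endpoint.
-/

open Topology
open scoped ContDiff

section Slope

variable {𝕜 E : Type*} [NontriviallyNormedField 𝕜] [NormedAddCommGroup E] [NormedSpace 𝕜 E]
  {f : 𝕜 → E} {f' : E} {a b : 𝕜}

theorem hasDerivAt_slope (hf : HasDerivAt f f' b) (hb : b ≠ a) :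
    HasDerivAt (slope f a) ((b - a)⁻¹ • (f' - slope f a b)) b := by
  have hba : b - a ≠ 0 := sub_ne_zero.2 hb
  have h : HasDerivAt (fun x => (x - a)⁻¹ • (f x - f a)) _ b :=
    (((hasDerivAt_id' b).sub_const a).inv hba).smul (hf.sub_const (f a))
  convert h using 1
  · exact funext (slope_def_module f a)
  rw [slope_def_module, Pi.inv_apply]
  generalize b - a = d
  module

theorem ContDiffAt.slope {n : WithTop ℕ∞} (hf : ContDiffAt 𝕜 n f b) (hb : b ≠ a) :
    ContDiffAt 𝕜 n (slope f a) b := by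
  rw [slope_fun_def]
  exact ((contDiffAt_id.sub contDiffAt_const).inv (sub_ne_zero.2 hb)).smul
    (hf.sub contDiffAt_const)

end Slope

section LocalInverse

variable {𝕂 E F : Type*} [RCLike 𝕂] [NormedAddCommGroup E] [NormedSpace 𝕂 E] [CompleteSpace E]
  [NormedAddCommGroup F] [NormedSpace 𝕂 F] {f : E → F} {f' : E ≃L[𝕂] F} {a : E} {n : WithTop ℕ∞}

theorem ContDiffAt.exists_localInverse (hf : ContDiffAt 𝕂 n f a)
    (hf' : HasFDerivAt f (f' : E →L[𝕂] F) a) (hn : n ≠ 0) (hn' : n ≠ ∞) :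
    ∃ g : F → E, g (f a) = a ∧ (∀ᶠ y in 𝓝 (f a), ContDiffAt 𝕂 n g y ∧ f (g y) = y) ∧
      ∀ᶠ x in 𝓝 a, g (f x) = x := by
  have hs := hf.hasStrictFDerivAt' hf' hn
  exact ⟨hf.localInverse hf' hn, hf.localInverse_apply_image hf' hn,
    ((hf.to_localInverse hf' hn).eventually hn').and hs.eventually_right_inverse,
    hs.eventually_left_inverse⟩

end LocalInverse

theorem mean_value_endpoint_of_deriv_ne_general
    (f : ℝ → ℝ) (hf : ContDiff ℝ 2 f)
    (a₀ b₀ c₀ : ℝ) (hab : a₀ < b₀)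
    (hmv : (f b₀ - f a₀) / (b₀ - a₀) = deriv f c₀)
    (hne : deriv f b₀ ≠ deriv f c₀) :
    ∃ δ > 0, ∃ ε > 0, ∃ B : ℝ → ℝ,
      B c₀ = b₀ ∧
      ContDiffOn ℝ 1 B (Set.Ioo (c₀ - ε) (c₀ + ε)) ∧
      (∀ c : ℝ, |c - c₀| < ε → (f (B c) - f a₀) / (B c - a₀) = deriv f c) ∧
      (∀ b c : ℝ, |b - b₀| < δ → |c - c₀| < ε →
        (f b - f a₀) / (b - a₀) = deriv f c → b = B c) := by
  rw [← slope_def_field] at hmv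
  have hf' : ContDiff ℝ 1 (deriv f) := hf.deriv'
  have hb₀ : b₀ ≠ a₀ := hab.ne'
  have hslope : HasDerivAt (slope f a₀) ((b₀ - a₀)⁻¹ • (deriv f b₀ - deriv f c₀)) b₀ := by
    simpa only [hmv] using hasDerivAt_slope
      ((hf.differentiable two_ne_zero).differentiableAt.hasDerivAt) hb₀
  have hslope_ne : (b₀ - a₀)⁻¹ • (deriv f b₀ - deriv f c₀) ≠ 0 :=
    smul_ne_zero (inv_ne_zero (sub_ne_zero.2 hb₀)) (sub_ne_zero.2 hne)
  obtain ⟨G, hG_b₀, hG_right, hG_left⟩ :=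
    ((hf.of_le one_le_two).contDiffAt.slope hb₀).exists_localInverse
      (hslope.hasFDerivAt_equiv hslope_ne) one_ne_zero (by simp)
  rw [hmv] at hG_b₀ hG_right
  obtain ⟨ε, hε, hG_c⟩ :=
    Metric.eventually_nhds_iff.1 (hf'.continuous.continuousAt.eventually hG_right)
  obtain ⟨δ, hδ, hG_b⟩ := Metric.eventually_nhds_iff.1 hG_left
  refine ⟨δ, hδ, ε, hε, G ∘ deriv f, hG_b₀, ?_, fun c hc => ?_, fun b c hb hc hbc => ?_⟩
  · rw [← Real.ball_eq_Ioo]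
    exact fun c hc => ((hG_c hc).1.comp c hf'.contDiffAt).contDiffWithinAt
  · rw [← slope_def_field]
    exact (hG_c hc).2
  · rw [← slope_def_field] at hbc
    rw [Function.comp_apply, ← hbc, hG_b hb]

/-- Theorem (main I, part b): if `f` is twice continuously differentiable, `c₀` is a
mean value abscissa for `f` on `[a₀, b₀]`, and `f'(b₀) ≠ f'(c₀)`, then the right
endpoint can locally be written as a continuously differentiable function `B` of the
mean value abscissa `c`, and nearby solutions are unique. -/
theorem mean_value_endpoint_of_deriv_ne
    (f : ℝ → ℝ) (hf : ContDiff ℝ 2 f)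
    (a₀ b₀ c₀ : ℝ) (hab : a₀ < b₀) (hc : c₀ ∈ Set.Ioo a₀ b₀)
    (hmv : (f b₀ - f a₀) / (b₀ - a₀) = deriv f c₀)
    (hne : deriv f b₀ ≠ deriv f c₀) :
    ∃ δ > 0, ∃ ε > 0, ∃ B : ℝ → ℝ,
      B c₀ = b₀ ∧
      ContDiffOn ℝ 1 B (Set.Ioo (c₀ - ε) (c₀ + ε)) ∧
      (∀ c : ℝ, |c - c₀| < ε → (f (B c) - f a₀) / (B c - a₀) = deriv f c) ∧
      (∀ b c : ℝ, |b - b₀| < δ → |c - c₀| < ε →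
        (f b - f a₀) / (b - a₀) = deriv f c → b = B c) :=
  mean_value_endpoint_of_deriv_ne_general f hf a₀ b₀ c₀ hab hmv hne
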